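/- Herglotz representation with vanishing linear term: let h be a holomorphic function mapping the upper half-plane ℂ₊ to ℂ₊ with representation h(z) = a + bz − G_ν(z) where ν ≥ 0 satisfies ∫ dν(t)/(t²+1) < ∞, a = Re(h(i)), b = lim_{y→∞} h(iy)/(iy). If lim_{y→∞} (iy)·h(iy) exists and is real, then b = 0 and a = ∫_ℝ t/(t² + 1) dν(t). -/

import Mathlib

/-! Since `(iy) h(iy) → L`, `h(iy) → 0`, which forces `b = 0`. The real part of `(iy) h(iy)` is
`y Im G_ν(iy) = -∫ y² / (t² + y²) dν`, so `∫ y² / (t² + y²) dν → -L` and Fatou's lemma gives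
`ν(ℝ) ≤ -L`. For the finite measure `ν`, dominated convergence gives
`Re G_ν(iy) → ∫ t / (t² + 1) dν`, while `Re h(iy) = a - Re G_ν(iy) → 0`. -/

open MeasureTheory Filter Complex Topology

noncomputable section

def cauchyKernel (z : ℂ) (t : ℝ) : ℂ := 1 / (z - t) + t / (t ^ 2 + 1)

/-- The transform `G_ν` of the statement. -/
def cauchyTransform (ν : Measure ℝ) (z : ℂ) : ℂ := ∫ t, cauchyKernel z t ∂ν

end

theorem tendsto_inv_I_mul_ofReal_atTop : Tendsto (fun y : ℝ => (I * y)⁻¹) atTop (𝓝 0) := by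
  refine tendsto_inv₀_cobounded.comp (tendsto_norm_atTop_iff_cobounded.mp ?_)
  simpa using tendsto_abs_atTop_atTop

theorem tendsto_zero_of_tendsto_I_mul_mul {g : ℝ → ℂ} {c : ℂ}
    (hg : Tendsto (fun y : ℝ => I * y * g y) atTop (𝓝 c)) : Tendsto g atTop (𝓝 0) := by
  refine (mul_zero c ▸ hg.mul tendsto_inv_I_mul_ofReal_atTop).congr' ?_
  filter_upwards [eventually_ne_atTop 0] with y hy
  rw [mul_comm, inv_mul_cancel_left₀ (by simpa using hy)]

theorem isFiniteMeasure_of_tendsto_integral {α ι : Type*} [MeasurableSpace α] {μ : Measure α}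
    {l : Filter ι} [l.IsCountablyGenerated] [l.NeBot] {f : ι → α → ℝ} {c : ℝ}
    (hf_nonneg : ∀ i x, 0 ≤ f i x) (hf_int : ∀ i, Integrable (f i) μ)
    (hf_one : ∀ x, Tendsto (fun i => f i x) l (𝓝 1))
    (hc : Tendsto (fun i => ∫ x, f i x ∂μ) l (𝓝 c)) : IsFiniteMeasure μ := by
  refine ⟨lt_of_le_of_lt ?_ (ENNReal.ofReal_lt_top (r := c))⟩
  calc μ Set.univ = ∫⁻ x, liminf (fun i => ENNReal.ofReal (f i x)) l ∂μ := by
        rw [lintegral_congr fun x => (ENNReal.tendsto_ofReal (hf_one x)).liminf_eq,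
          ENNReal.ofReal_one, lintegral_one]
    _ ≤ liminf (fun i => ∫⁻ x, ENNReal.ofReal (f i x) ∂μ) l :=
        lintegral_liminf_le' fun i => (hf_int i).aemeasurable.ennreal_ofReal
    _ = ENNReal.ofReal c := by
        simp_rw [← ofReal_integral_eq_lintegral_ofReal (hf_int _) (ae_of_all _ (hf_nonneg _))]
        exact (ENNReal.tendsto_ofReal hc).liminf_eq

theorem abs_div_sq_add_sq_le (t : ℝ) {y : ℝ} (hy : 0 < y) :
    |t / (t ^ 2 + y ^ 2)| ≤ 1 / (2 * y) := by
  have hden : 0 < t ^ 2 + y ^ 2 := by positivity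
  rw [abs_div, abs_of_pos hden, div_le_div_iff₀ hden (by positivity)]
  nlinarith [sq_nonneg (|t| - y), sq_abs t]

theorem tendsto_div_sq_add_sq_atTop (c t : ℝ) :
    Tendsto (fun y : ℝ => c / (t ^ 2 + y ^ 2)) atTop (𝓝 0) :=
  tendsto_const_nhds.div_atTop (tendsto_atTop_add_const_left _ _ (tendsto_pow_atTop two_ne_zero))

theorem tendsto_sq_div_sq_add_sq_atTop (t : ℝ) :
    Tendsto (fun y : ℝ => y ^ 2 / (t ^ 2 + y ^ 2)) atTop (𝓝 1) := by
  have hlim := (tendsto_const_nhds (x := (1 : ℝ))).sub (tendsto_div_sq_add_sq_atTop (t ^ 2) t)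
  rw [sub_zero] at hlim
  refine hlim.congr' ?_
  filter_upwards [eventually_ne_atTop 0] with y hy
  field_simp
  ring

theorem integrable_sq_div_sq_add_sq {ν : Measure ℝ}
    (hν : Integrable (fun t : ℝ => 1 / (t ^ 2 + 1)) ν) (y : ℝ) :
    Integrable (fun t : ℝ => y ^ 2 / (t ^ 2 + y ^ 2)) ν := by
  refine (hν.const_mul (y ^ 2 + 1)).mono'
    (by fun_prop : Measurable fun t : ℝ => y ^ 2 / (t ^ 2 + y ^ 2)).aestronglyMeasurable
    (ae_of_all _ fun t => ?_)
  rw [Real.norm_eq_abs, abs_of_nonneg (by positivity), mul_one_div]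
  rcases (by positivity : 0 ≤ t ^ 2 + y ^ 2).eq_or_lt with hzero | hpos
  · rw [← hzero, div_zero]
    positivity
  · rw [div_le_div_iff₀ hpos (by positivity)]
    nlinarith [sq_nonneg t, sq_nonneg y]

theorem ofReal_sq_add_one_ne_zero (t : ℝ) : (t : ℂ) ^ 2 + 1 ≠ 0 := by
  exact_mod_cast (by positivity : t ^ 2 + 1 ≠ 0)

theorem im_le_norm_sub_ofReal (z : ℂ) (t : ℝ) : z.im ≤ ‖z - t‖ := by
  simpa using (le_abs_self _).trans (abs_im_le_norm (z - t))

theorem sub_ofReal_ne_zero {z : ℂ} (hz : 0 < z.im) (t : ℝ) : z - t ≠ 0 :=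
  norm_pos_iff.mp (hz.trans_le (im_le_norm_sub_ofReal z t))

theorem measurable_cauchyKernel (z : ℂ) : Measurable (cauchyKernel z) := by
  unfold cauchyKernel
  fun_prop

theorem norm_cauchyKernel_le {z : ℂ} (hz : 0 < z.im) (t : ℝ) :
    ‖cauchyKernel z t‖ ≤ (‖z‖ + ‖z ^ 2 + 1‖ / z.im) * (1 / (t ^ 2 + 1)) := by
  have hkernel :
      cauchyKernel z t = (-z + (z ^ 2 + 1) / (z - t)) * (1 / ((t : ℂ) ^ 2 + 1)) := by
    have := sub_ofReal_ne_zero hz t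
    have := ofReal_sq_add_one_ne_zero t
    unfold cauchyKernel
    field_simp
    ring
  have hnorm : ‖1 / ((t : ℂ) ^ 2 + 1)‖ = 1 / (t ^ 2 + 1) := by
    rw [← ofReal_one, ← ofReal_pow, ← ofReal_add, ← ofReal_div, norm_real, Real.norm_eq_abs,
      abs_of_pos (by positivity)]
  rw [hkernel, norm_mul, hnorm]
  gcongr
  refine (norm_add_le _ _).trans ?_
  rw [norm_neg, norm_div]
  gcongr
  exact im_le_norm_sub_ofReal z t

theorem integrable_cauchyKernel {ν : Measure ℝ}
    (hν : Integrable (fun t : ℝ => 1 / (t ^ 2 + 1)) ν) {z : ℂ} (hz : 0 < z.im) :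
    Integrable (cauchyKernel z) ν :=
  (hν.const_mul _).mono' (measurable_cauchyKernel z).aestronglyMeasurable
    (ae_of_all _ (norm_cauchyKernel_le hz))

theorem cauchyKernel_I_mul {y : ℝ} (hy : 0 < y) (t : ℝ) :
    cauchyKernel (I * y) t =
      ((t / (t ^ 2 + 1) - t / (t ^ 2 + y ^ 2) : ℝ) : ℂ) - (y / (t ^ 2 + y ^ 2) : ℝ) * I := by
  have := ofReal_sq_add_one_ne_zero t
  have := sub_ofReal_ne_zero (z := I * y) (by simpa using hy) t
  have : (t : ℂ) ^ 2 + (y : ℂ) ^ 2 ≠ 0 := by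
    exact_mod_cast (by positivity : t ^ 2 + y ^ 2 ≠ 0)
  unfold cauchyKernel
  push_cast
  field_simp
  ring_nf
  simp only [I_sq]
  ring

section CauchyTransform

variable {ν : Measure ℝ}

theorem cauchyTransform_I_mul_re (hν : Integrable (fun t : ℝ => 1 / (t ^ 2 + 1)) ν)
    {y : ℝ} (hy : 0 < y) :
    (cauchyTransform ν (I * y)).re = ∫ t, (t / (t ^ 2 + 1) - t / (t ^ 2 + y ^ 2)) ∂ν := by
  rw [cauchyTransform, ← RCLike.re_eq_complex_re,
    ← integral_re (integrable_cauchyKernel hν (by simpa))]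
  simp only [cauchyKernel_I_mul hy, RCLike.re_to_complex, sub_re, ofReal_re, re_ofReal_mul,
    I_re, mul_zero, sub_zero]

theorem cauchyTransform_I_mul_im (hν : Integrable (fun t : ℝ => 1 / (t ^ 2 + 1)) ν)
    {y : ℝ} (hy : 0 < y) :
    (cauchyTransform ν (I * y)).im = -∫ t, y / (t ^ 2 + y ^ 2) ∂ν := by
  rw [cauchyTransform, ← RCLike.im_eq_complex_im,
    ← integral_im (integrable_cauchyKernel hν (by simpa)), ← integral_neg]
  simp only [cauchyKernel_I_mul hy, RCLike.im_to_complex, sub_im, ofReal_im, im_ofReal_mul,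
    I_im, mul_one, zero_sub]

theorem isFiniteMeasure_of_tendsto_mul_im_cauchyTransform
    (hν : Integrable (fun t : ℝ => 1 / (t ^ 2 + 1)) ν) {c : ℝ}
    (hc : Tendsto (fun y : ℝ => y * (cauchyTransform ν (I * y)).im) atTop (𝓝 c)) :
    IsFiniteMeasure ν := by
  refine isFiniteMeasure_of_tendsto_integral (l := atTop) (fun _ _ => by positivity)
    (integrable_sq_div_sq_add_sq hν) tendsto_sq_div_sq_add_sq_atTop (hc.neg.congr' ?_)
  filter_upwards [eventually_gt_atTop 0] with y hy
  rw [cauchyTransform_I_mul_im hν hy, mul_neg, neg_neg, ← integral_const_mul]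
  congr with t
  ring

theorem tendsto_re_cauchyTransform_I_mul [IsFiniteMeasure ν] :
    Tendsto (fun y : ℝ => (cauchyTransform ν (I * y)).re) atTop
      (𝓝 (∫ t, t / (t ^ 2 + 1) ∂ν)) := by
  have hν : Integrable (fun t : ℝ => 1 / (t ^ 2 + 1)) ν :=
    .of_bound (by fun_prop : Measurable fun t : ℝ => 1 / (t ^ 2 + 1)).aestronglyMeasurable 1
      (ae_of_all _ fun t => by
        rw [Real.norm_eq_abs, abs_of_pos (by positivity)]
        exact div_le_one_of_le₀ (by nlinarith [sq_nonneg t]) (by positivity))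
  have hlim : Tendsto (fun y : ℝ => ∫ t, (t / (t ^ 2 + 1) - t / (t ^ 2 + y ^ 2)) ∂ν) atTop
      (𝓝 (∫ t, t / (t ^ 2 + 1) ∂ν)) := by
    refine tendsto_integral_filter_of_dominated_convergence (fun _ => 1) ?_ ?_
      (integrable_const 1) (ae_of_all _ fun t => ?_)
    · exact .of_forall fun y => (by fun_prop : Measurable fun t : ℝ =>
        t / (t ^ 2 + 1) - t / (t ^ 2 + y ^ 2)).aestronglyMeasurable
    · filter_upwards [eventually_ge_atTop 1] with y hy
      refine ae_of_all _ fun t => (norm_sub_le _ _).trans ?_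
      have h1 := abs_div_sq_add_sq_le t zero_lt_one
      have h2 := abs_div_sq_add_sq_le t (zero_lt_one.trans_le hy)
      have h3 : 1 / (2 * y) ≤ 1 / 2 := by gcongr; linarith
      simp only [one_pow, Real.norm_eq_abs] at h1 ⊢
      linarith
    · simpa using tendsto_const_nhds.sub (tendsto_div_sq_add_sq_atTop t t)
  refine hlim.congr' ?_
  filter_upwards [eventually_gt_atTop 0] with y hy
  rw [cauchyTransform_I_mul_re hν hy]

end CauchyTransform

theorem herglotz_no_linear_term_general (h : ℂ → ℂ)
    (ν : Measure ℝ)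
    (hν : Integrable (fun t : ℝ => 1 / (t ^ 2 + 1)) ν)
    (a b : ℝ)
    (hrep : ∀ z : ℂ, 0 < z.im →
      h z = (a : ℂ) + (b : ℂ) * z -
        ∫ t : ℝ, (1 / (z - (t : ℂ)) + (t : ℂ) / ((t : ℂ) ^ 2 + 1)) ∂ν)
    (hb : Tendsto (fun y : ℝ => h (Complex.I * y) / (Complex.I * y)) atTop (nhds (b : ℂ)))
    (L : ℝ)
    (hL : Tendsto (fun y : ℝ => (Complex.I * y) * h (Complex.I * y)) atTop (nhds (L : ℂ))) :
    b = 0 ∧ a = ∫ t : ℝ, t / (t ^ 2 + 1) ∂ν := by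
  have hzero : Tendsto (fun y : ℝ => h (I * y)) atTop (𝓝 0) :=
    tendsto_zero_of_tendsto_I_mul_mul hL
  have hb0 : b = 0 := by
    have hdiv : Tendsto (fun y : ℝ => h (I * y) / (I * y)) atTop (𝓝 0) := by
      simpa only [div_eq_mul_inv, zero_mul] using hzero.mul tendsto_inv_I_mul_ofReal_atTop
    exact_mod_cast tendsto_nhds_unique hb hdiv
  subst hb0
  have h_I_mul : ∀ y : ℝ, 0 < y → h (I * y) = a - cauchyTransform ν (I * y) := fun y hy => by
    rw [hrep (I * y) (by simpa using hy), ofReal_zero, zero_mul, add_zero]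
    rfl
  have hfin : IsFiniteMeasure ν := isFiniteMeasure_of_tendsto_mul_im_cauchyTransform hν <|
    ((continuous_re.tendsto _).comp hL).congr' <| by
      filter_upwards [eventually_gt_atTop 0] with y hy
      simp [h_I_mul y hy, mul_re]
  have hre :
      Tendsto (fun y : ℝ => (h (I * y)).re) atTop (𝓝 (a - ∫ t, t / (t ^ 2 + 1) ∂ν)) :=
    (tendsto_re_cauchyTransform_I_mul.const_sub a).congr' <| by
      filter_upwards [eventually_gt_atTop 0] with y hy
      simp [h_I_mul y hy]
  have hre_zero := tendsto_nhds_unique ((continuous_re.tendsto 0).comp hzero) hre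
  rw [zero_re] at hre_zero
  exact ⟨rfl, by linarith⟩

/-- Herglotz representation with vanishing linear term. If `h` maps
`ℂ₊` holomorphically to `ℂ₊` with representation `h(z) = a + bz − G_ν(z)`,
`a = Re h(i)`, `b = lim_{y→∞} h(iy)/(iy)`, and `lim_{y→∞} (iy)h(iy)` exists and is
real, then `b = 0` and `a = ∫ t/(t²+1) dν(t)`. -/
theorem herglotz_no_linear_term (h : ℂ → ℂ)
    (hhol : DifferentiableOn ℂ h {z : ℂ | 0 < z.im})
    (hmap : ∀ z : ℂ, 0 < z.im → 0 < (h z).im)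
    (ν : Measure ℝ)
    (hν : Integrable (fun t : ℝ => 1 / (t ^ 2 + 1)) ν)
    (a b : ℝ)
    (hrep : ∀ z : ℂ, 0 < z.im →
      h z = (a : ℂ) + (b : ℂ) * z -
        ∫ t : ℝ, (1 / (z - (t : ℂ)) + (t : ℂ) / ((t : ℂ) ^ 2 + 1)) ∂ν)
    (ha : a = (h Complex.I).re)
    (hb : Tendsto (fun y : ℝ => h (Complex.I * y) / (Complex.I * y)) atTop (nhds (b : ℂ)))
    (L : ℝ)
    (hL : Tendsto (fun y : ℝ => (Complex.I * y) * h (Complex.I * y)) atTop (nhds (L : ℂ))) :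
    b = 0 ∧ a = ∫ t : ℝ, t / (t ^ 2 + 1) ∂ν :=
  herglotz_no_linear_term_general h ν hν a b hrep hb L hL
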